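/- Let G be a looped graph with n vertices, m edges and c loops with m + c ≤ 2n. Then the matrix M_{2,0,2}(G) has rank m + c (full row rank over the rational function field) if and only if G is (2,0,2)-graded-sparse. In particular, when m + c = 2n, M_{2,0,2}(G) has rank 2n if and only if G is looped-(2,2). -/

import Mathlib

/-!
STATEMENT 10: the matrix M_{2,0,2}(G) represents the (2,0,2)-graded-sparsity matroid.
Let G be a looped graph with n vertices, m edges and c loops with m + c ≤ 2n.  Then
M_{2,0,2}(G) has rank m + c (full row rank over the rational function field) iff G is
(2,0,2)-graded-sparse.  In particular, when m + c = 2n, M_{2,0,2}(G) has rank 2n iff G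
is looped-(2,2).
-/

open MvPolynomial

/-- A looped graph. -/
structure LGraph (V E L : Type) where
  ends : E → V × V
  ne : ∀ e, (ends e).1 ≠ (ends e).2
  loopAt : L → V

namespace LGraph

variable {V E L : Type}

noncomputable def edgeCount (G : LGraph V E L) (S : Finset V) : ℕ :=
  Nat.card {e : E // (G.ends e).1 ∈ S ∧ (G.ends e).2 ∈ S}

noncomputable def loopCount (G : LGraph V E L) (S : Finset V) : ℕ :=
  Nat.card {l : L // G.loopAt l ∈ S}

/-- `(2,0,2)`-graded-sparsity. -/
def IsGradedSparse202 (G : LGraph V E L) : Prop :=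
  (∀ S : Finset V, G.edgeCount S ≤ 2 * S.card - 2) ∧
  (∀ S : Finset V, G.edgeCount S + G.loopCount S ≤ 2 * S.card)

/-- A looped-(2,2) graph. -/
def IsLooped22 (G : LGraph V E L) [Fintype V] [Fintype E] [Fintype L] : Prop :=
  G.IsGradedSparse202 ∧ Fintype.card E + Fintype.card L = 2 * Fintype.card V

end LGraph

/-- The rational function field `ℝ(a_e, b_e, c_l, d_l)`; `Sum.inl (Sum.inl e)` is `a_e`,
`Sum.inl (Sum.inr e)` is `b_e`, `Sum.inr (Sum.inl l)` is `c_l`, `Sum.inr (Sum.inr l)` is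
`d_l`. -/
abbrev DSField (E L : Type) := FractionRing (MvPolynomial ((E ⊕ E) ⊕ (L ⊕ L)) ℝ)

noncomputable def dsVar (E L : Type) (v : (E ⊕ E) ⊕ (L ⊕ L)) : DSField E L :=
  algebraMap (MvPolynomial ((E ⊕ E) ⊕ (L ⊕ L)) ℝ) (DSField E L) (X v)

/-- The matrix `M_{2,0,2}(G)`: the row of edge `e = ij` has entries `a_e, b_e` in the
two columns of vertex `i`, entries `−a_e, −b_e` in the two columns of vertex `j`, and
zeros elsewhere; the row of loop `l` on vertex `i` has entries `c_l, d_l` in the two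
columns of vertex `i` and zeros elsewhere. -/
noncomputable def M202 {V E L : Type} [DecidableEq V] (G : LGraph V E L) :
    Matrix (E ⊕ L) (V ⊕ V) (DSField E L) := fun row col =>
  match row with
  | Sum.inl e =>
      match col with
      | Sum.inl v =>
          if v = (G.ends e).1 then dsVar E L (Sum.inl (Sum.inl e))
          else if v = (G.ends e).2 then -dsVar E L (Sum.inl (Sum.inl e)) else 0
      | Sum.inr v =>
          if v = (G.ends e).1 then dsVar E L (Sum.inl (Sum.inr e))
          else if v = (G.ends e).2 then -dsVar E L (Sum.inl (Sum.inr e)) else 0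
  | Sum.inr l =>
      match col with
      | Sum.inl v => if v = G.loopAt l then dsVar E L (Sum.inr (Sum.inl l)) else 0
      | Sum.inr v => if v = G.loopAt l then dsVar E L (Sum.inr (Sum.inr l)) else 0


/-!
A loop at `v` is treated as an edge from `v` to a ground vertex `none`. Every row of
`M_{2,0,2}(G)` is then the incidence vector `δ_i - δ_j ∈ K^V` of its edge (with `δ_none = 0`),
scaled by one variable in the first block of columns and by another in the second, and
`(2,0,2)`-graded sparsity becomes `(2,2)`-sparsity of the grounded multigraph on `Option V`.

Necessity: the rows of the edges inside a vertex set `T` lie in two copies of the span of the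
`δ_a - δ_{a₀}` (`a ∈ T`), of dimension at most `2 (|T| - 1)`.

Sufficiency: call `a ~ b` when `δ_a - δ_b` lies in the span of the incidence vectors of a set
`Y` of rows. Sparsity, applied to each class, bounds `|Y|` by `2 (|V| + 1 - #classes)`, while a
functional annihilating that span is determined by its values on representatives of the
classes other than that of `none`, so the rank of `Y` is at least `|V| + 1 - #classes`. Hence
`|Y| ≤ 2 rk Y`, and Edmonds' matroid partition theorem splits the rows into two sets `A`, `B`
with independent incidence vectors. Specialising the variables to `(1, 0)` on `A` and `(0, 1)`
on `B` gives a real matrix with independent rows, hence a nonzero maximal minor, and that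
minor stays nonzero over the field of rational functions.
-/

open Module Submodule Finset

namespace Matrix

variable {m n K : Type*} [Fintype m] [Field K]

theorem rank_eq_card_iff_linearIndependent_row [Fintype n] (A : Matrix m n K) :
    A.rank = Fintype.card m ↔ LinearIndependent K A.row := by
  rw [rank_eq_finrank_span_row, linearIndependent_iff_card_eq_finrank_span, Set.finrank, eq_comm]

variable [DecidableEq m]

theorem linearIndependent_row_of_isUnit_submatrix {A : Matrix m n K} {g : m → n}
    (h : IsUnit (A.submatrix id g)) : LinearIndependent K A.row :=
  .of_comp (LinearMap.funLeft K K g) (linearIndependent_rows_iff_isUnit.2 h)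

variable [Fintype n]

theorem exists_isUnit_submatrix_of_linearIndependent_row {A : Matrix m n K}
    (h : LinearIndependent K A.row) : ∃ g : m → n, IsUnit (A.submatrix id g) := by
  obtain ⟨κ, a, ha, hspan, hind⟩ := exists_linearIndependent' K A.col
  have := Finite.of_injective a ha
  have := Fintype.ofFinite κ
  have hcols : finrank K (span K (Set.range A.col)) = Fintype.card m := by
    rw [← rank_eq_finrank_span_cols, h.rank_matrix]
  have hκ : Fintype.card m = Fintype.card κ := by
    rw [← hcols, ← hspan, finrank_span_eq_card hind]
  let e := Fintype.equivOfCardEq hκ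
  exact ⟨a ∘ e, linearIndependent_cols_iff_isUnit.1 (hind.comp e e.injective)⟩

theorem linearIndependent_row_map_of_linearIndependent_row_map {R F : Type*} [CommRing R]
    [Field F] {f : R →+* K} (hf : Function.Injective f) (φ : R →+* F) {P : Matrix m n R}
    (h : LinearIndependent F (P.map φ).row) : LinearIndependent K (P.map f).row := by
  obtain ⟨g, hg⟩ := exists_isUnit_submatrix_of_linearIndependent_row h
  have hdet : (P.submatrix id g).det ≠ 0 := by
    intro h0
    rw [isUnit_iff_isUnit_det, submatrix_map, ← RingHom.mapMatrix_apply, ← RingHom.map_det, h0,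
      map_zero] at hg
    exact not_isUnit_zero hg
  refine linearIndependent_row_of_isUnit_submatrix (g := g) ?_
  rw [isUnit_iff_isUnit_det, submatrix_map, ← RingHom.mapMatrix_apply, ← RingHom.map_det,
    isUnit_iff_ne_zero]
  exact (map_ne_zero_iff f hf).2 hdet

end Matrix

section SpanRank

variable {ι K W : Type*} [Field K] [AddCommGroup W] [Module K W]

theorem linearIndepOn_iff_card_le_finrank (u : ι → W) (Y : Finset ι) :
    LinearIndepOn K u ↑Y ↔ #Y ≤ (u '' ↑Y).finrank K := by
  rw [LinearIndepOn, linearIndependent_iff_card_le_finrank_span, ← Set.image_eq_range]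
  simp

variable [DecidableEq ι] [FiniteDimensional K W]

theorem finrank_image_union_add_finrank_image_inter_le (u : ι → W) (Y Z : Finset ι) :
    (u '' ↑(Y ∪ Z)).finrank K + (u '' ↑(Y ∩ Z)).finrank K ≤
      (u '' ↑Y).finrank K + (u '' ↑Z).finrank K := by
  have hinter : span K (u '' ↑(Y ∩ Z)) ≤ span K (u '' ↑Y) ⊓ span K (u '' ↑Z) :=
    le_inf (span_mono (Set.image_mono (by simp))) (span_mono (Set.image_mono (by simp)))
  have := finrank_sup_add_finrank_inf_eq (span K (u '' ↑Y)) (span K (u '' ↑Z))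
  rw [← span_union, ← Set.image_union, ← coe_union] at this
  have := Submodule.finrank_mono hinter
  simp only [Set.finrank]
  omega

theorem finrank_image_mkQ_add_finrank_span_singleton (u : ι → W) (x : ι) (Y : Finset ι) :
    ((span K {u x}).mkQ ∘ u '' ↑Y).finrank K + finrank K (span K {u x}) =
      (u '' ↑(insert x Y)).finrank K := by
  set q := span K {u x}
  set P := span K (u '' ↑(insert x Y))
  have hqP : q ≤ P := span_mono (by simp)
  have hrange : LinearMap.range (q.mkQ ∘ₗ P.subtype) = span K (q.mkQ ∘ u '' ↑Y) := by
    rw [LinearMap.range_comp, range_subtype, map_span, ← Set.image_comp, coe_insert,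
      Set.image_insert_eq, Function.comp_apply, mkQ_apply,
      (Quotient.mk_eq_zero q).2 (mem_span_singleton_self _), span_insert_zero]
  have hker : finrank K (LinearMap.ker (q.mkQ ∘ₗ P.subtype)) = finrank K q := by
    rw [LinearMap.ker_comp, ker_mkQ, (comapSubtypeEquivOfLe hqP).finrank_eq]
  have := LinearMap.finrank_range_add_finrank_ker (q.mkQ ∘ₗ P.subtype)
  rwa [hrange, hker] at this

end SpanRank

section MatroidPartition

variable {ι K : Type*} [Field K] [DecidableEq ι]
  {W₁ W₂ : Type*} [AddCommGroup W₁] [Module K W₁] [FiniteDimensional K W₁]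
  [AddCommGroup W₂] [Module K W₂] [FiniteDimensional K W₂]

theorem linearIndepOn_insert_of_linearIndepOn_mkQ {u : ι → W₁} {x : ι} (hx : u x ≠ 0)
    {A : Finset ι} (hxA : x ∉ A) (hA : LinearIndepOn K ((span K {u x}).mkQ ∘ u) ↑A) :
    LinearIndepOn K u ↑(insert x A) := by
  rw [linearIndepOn_iff_card_le_finrank] at hA ⊢
  rw [← finrank_image_mkQ_add_finrank_span_singleton, finrank_span_singleton hx,
    card_insert_of_notMem hxA]
  omega

theorem exists_finrank_insert_add_finrank_le_card {u₁ : ι → W₁} {u₂ : ι → W₂} {x : ι}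
    {R : Finset ι} (h : ¬ (u₁ x ≠ 0 ∧ ∀ Y ⊆ R,
      #Y ≤ ((span K {u₁ x}).mkQ ∘ u₁ '' ↑Y).finrank K + (u₂ '' ↑Y).finrank K)) :
    ∃ Y ⊆ R, (u₁ '' ↑(insert x Y)).finrank K + (u₂ '' ↑Y).finrank K ≤ #Y := by
  by_cases hx : u₁ x = 0
  · refine ⟨∅, empty_subset R, ?_⟩
    rw [insert_empty, coe_singleton, Set.image_singleton, hx, coe_empty, Set.image_empty]
    simp [Set.finrank]
  · push Not at h
    obtain ⟨Y, hYR, hY⟩ := h hx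
    have := finrank_image_mkQ_add_finrank_span_singleton (K := K) u₁ x Y
    rw [finrank_span_singleton hx] at this
    exact ⟨Y, hYR, by omega⟩

/-- Edmonds' matroid partition theorem for two linearly represented matroids. -/
theorem exists_linearIndepOn_and_linearIndepOn_sdiff (u₁ : ι → W₁) (u₂ : ι → W₂) (R : Finset ι)
    (h : ∀ Y ⊆ R, #Y ≤ (u₁ '' ↑Y).finrank K + (u₂ '' ↑Y).finrank K) :
    ∃ A ⊆ R, LinearIndepOn K u₁ ↑A ∧ LinearIndepOn K u₂ ↑(R \ A) := by
  induction R using Finset.induction_on generalizing W₁ W₂ with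
  | empty => exact ⟨∅, subset_refl _, by simp, by simp⟩
  | @insert x R hxR ih =>
    by_cases h₁ : u₁ x ≠ 0 ∧ ∀ Y ⊆ R,
        #Y ≤ ((span K {u₁ x}).mkQ ∘ u₁ '' ↑Y).finrank K + (u₂ '' ↑Y).finrank K
    · obtain ⟨A, hAR, hA, hRA⟩ := ih _ u₂ h₁.2
      refine ⟨insert x A, insert_subset_insert x hAR,
        linearIndepOn_insert_of_linearIndepOn_mkQ h₁.1 (fun hx => hxR (hAR hx)) hA, ?_⟩
      rwa [insert_sdiff_insert, sdiff_insert_of_notMem hxR]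
    by_cases h₂ : u₂ x ≠ 0 ∧ ∀ Y ⊆ R,
        #Y ≤ ((span K {u₂ x}).mkQ ∘ u₂ '' ↑Y).finrank K + (u₁ '' ↑Y).finrank K
    · obtain ⟨A, hAR, hA, hRA⟩ := ih u₁ _ fun Y hY => (h₂.2 Y hY).trans_eq (add_comm _ _)
      refine ⟨A, hAR.trans (subset_insert x R), hA, ?_⟩
      rw [insert_sdiff_of_notMem _ (fun hx => hxR (hAR hx))]
      exact linearIndepOn_insert_of_linearIndepOn_mkQ h₂.1 (fun hx => hxR (mem_sdiff.1 hx).1) hRA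
    -- `x` fits on neither side: submodularity on `Y ∪ Z` and `Y ∩ Z` contradicts `h`.
    exfalso
    obtain ⟨Y, hYR, hY⟩ := exists_finrank_insert_add_finrank_le_card h₁
    obtain ⟨Z, hZR, hZ⟩ := exists_finrank_insert_add_finrank_le_card h₂
    have hxY : x ∉ Y := fun hx => hxR (hYR hx)
    have hxZ : x ∉ Z := fun hx => hxR (hZR hx)
    have sub₁ := finrank_image_union_add_finrank_image_inter_le (K := K) u₁ (insert x Y) Z
    have sub₂ := finrank_image_union_add_finrank_image_inter_le (K := K) u₂ Y (insert x Z)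
    rw [insert_union, insert_inter_of_notMem hxZ] at sub₁
    rw [union_insert, inter_insert_of_notMem hxY] at sub₂
    have hunion := h (insert x (Y ∪ Z)) (insert_subset_insert x (union_subset hYR hZR))
    have hinter := h (Y ∩ Z) ((inter_subset_left.trans hYR).trans (subset_insert x R))
    rw [card_insert_of_notMem (by simp [hxY, hxZ])] at hunion
    have := card_union_add_card_inter Y Z
    omega

end MatroidPartition

section DoubledMatrix

variable {ι n R : Type*}

def doubledMatrix [Mul R] (u : ι → n → R) (x y : ι → R) : Matrix ι (n ⊕ n) R :=
  Matrix.of fun i => Sum.elim (x i • u i) (y i • u i)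

theorem doubledMatrix_map {S : Type*} [Semiring R] [Semiring S] (f : R →+* S) (u : ι → n → R)
    (x y : ι → R) :
    (doubledMatrix u x y).map f = doubledMatrix (fun i j => f (u i j)) (f ∘ x) (f ∘ y) := by
  ext i (j | j) <;> simp [doubledMatrix]

variable {K : Type*} [Field K]

theorem card_le_two_mul_finrank_of_linearIndependent_row_doubledMatrix [Fintype n]
    {u : ι → n → K} {x y : ι → K} (hind : LinearIndependent K (doubledMatrix u x y).row)
    (t : Finset ι) (W : Submodule K (n → K)) (hW : ∀ i ∈ t, u i ∈ W) : #t ≤ 2 * finrank K W := by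
  let v : t → W × W := fun i =>
    (⟨x i • u i, W.smul_mem _ (hW i i.2)⟩, ⟨y i • u i, W.smul_mem _ (hW i i.2)⟩)
  let Φ : W × W →ₗ[K] (n ⊕ n → K) :=
    (LinearEquiv.sumArrowLequivProdArrow n n K K).symm.toLinearMap ∘ₗ W.subtype.prodMap W.subtype
  have hΦv : Φ ∘ v = (doubledMatrix u x y).row ∘ Subtype.val := by
    ext i (j | j) <;> rfl
  have hv : LinearIndependent K v := .of_comp Φ (hΦv ▸ hind.comp _ Subtype.val_injective)
  simpa [finrank_prod, two_mul] using hv.fintype_card_le_finrank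

theorem linearIndependent_row_doubledMatrix_ite [Fintype ι] [DecidableEq ι] {u : ι → n → K}
    {A B : Finset ι} (hAB : ∀ i, i ∈ A ∨ i ∈ B) (hA : LinearIndepOn K u ↑A)
    (hB : LinearIndepOn K u ↑B) :
    LinearIndependent K (doubledMatrix u (fun i => if i ∈ A then 1 else 0)
      (fun i => if i ∈ B then 1 else 0)).row := by
  refine Fintype.linearIndependent_iff.2 fun g hg i => ?_
  have h₁ : ∑ i ∈ A, g i • u i = 0 := by
    ext j
    simpa [doubledMatrix, Finset.sum_apply, ite_smul, ite_apply, Finset.sum_ite_mem]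
      using congr_fun hg (Sum.inl j)
  have h₂ : ∑ i ∈ B, g i • u i = 0 := by
    ext j
    simpa [doubledMatrix, Finset.sum_apply, ite_smul, ite_apply, Finset.sum_ite_mem]
      using congr_fun hg (Sum.inr j)
  rcases hAB i with hi | hi
  · exact linearIndepOn_iff'.1 hA A g subset_rfl h₁ i hi
  · exact linearIndepOn_iff'.1 hB B g subset_rfl h₂ i hi

end DoubledMatrix

theorem card_add_two_mul_card_quotient_le {W ι : Type*} [Fintype W] [Finite ι] (s : Setoid W)
    (ends : ι → W × W) (Y : Finset ι) (hY : ∀ i ∈ Y, s (ends i).1 (ends i).2)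
    (hsparse : ∀ T : Finset W, T.Nonempty →
      Nat.card {i // (ends i).1 ∈ T ∧ (ends i).2 ∈ T} + 2 ≤ 2 * #T) :
    #Y + 2 * Nat.card (Quotient s) ≤ 2 * Fintype.card W := by
  classical
  have := Fintype.ofFinite ι
  let cls (q : Quotient s) : Finset W := {a | ⟦a⟧ = q}
  have hclass (q : Quotient s) : #{i ∈ Y | ⟦(ends i).1⟧ = q} + 2 ≤ 2 * #(cls q) := by
    obtain ⟨a, rfl⟩ := q.exists_rep
    refine le_trans ?_ (hsparse (cls ⟦a⟧) ⟨a, by simp [cls]⟩)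
    rw [Nat.card_eq_fintype_card, Fintype.card_subtype]
    gcongr
    intro i hi
    simp only [mem_filter, mem_univ, true_and, cls] at hi ⊢
    exact ⟨hi.2, (Quotient.sound (hY i hi.1)).symm.trans hi.2⟩
  have hW : Fintype.card W = ∑ q : Quotient s, #(cls q) := card_eq_sum_card_fiberwise (by simp)
  have hYsum : #Y = ∑ q : Quotient s, #{i ∈ Y | ⟦(ends i).1⟧ = q} :=
    card_eq_sum_card_fiberwise (by simp)
  have := Finset.sum_le_sum fun (q : Quotient s) (_ : q ∈ univ) => hclass q
  rw [sum_add_distrib, ← hYsum, ← mul_sum, ← hW, sum_const, card_univ, smul_eq_mul] at this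
  rw [Nat.card_eq_fintype_card]
  omega

section GroundedSetoid

def optionSingle {V : Type*} [DecidableEq V] (K : Type*) [Zero K] [One K] : Option V → V → K
  | none => 0
  | some v => Pi.single v 1

theorem optionSingle_map {V R S : Type*} [DecidableEq V] [Semiring R] [Semiring S] (f : R →+* S)
    (a : Option V) (v : V) : f (optionSingle R a v) = optionSingle S a v := by
  cases a <;> simp [optionSingle, Pi.single_apply, apply_ite f]

variable {V K : Type*} [DecidableEq V] [Field K]

def groundedSetoid (U : Submodule K (V → K)) : Setoid (Option V) where
  r a b := optionSingle K a - optionSingle K b ∈ U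
  iseqv :=
    { refl := fun a => by simp
      symm := fun h => by simpa [neg_sub] using U.neg_mem h
      trans := fun h₁ h₂ => by simpa using U.add_mem h₁ h₂ }

theorem card_add_one_le_finrank_add_card_quotient [Fintype V] (U : Submodule K (V → K)) :
    Fintype.card V + 1 ≤ finrank K U + Nat.card (Quotient (groundedSetoid U)) := by
  classical
  set s := groundedSetoid U
  set q₀ : Quotient s := ⟦none⟧
  let Φ : Dual K (V → K) →ₗ[K] ({q // q ≠ q₀} → K) :=
    LinearMap.pi fun q => LinearMap.applyₗ (optionSingle K q.1.out)
  have hΦ : Function.Injective (Φ.domRestrict U.dualAnnihilator) := by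
    refine LinearMap.injective_domRestrict_iff.2 (disjoint_def.2 fun φ hφU hφ => ?_)
    have hout (a : Option V) :
        φ (optionSingle K a) = φ (optionSingle K (⟦a⟧ : Quotient s).out) := by
      have := (mem_dualAnnihilator _).1 hφU _ (Quotient.mk_out (s := s) a)
      rwa [map_sub, sub_eq_zero, eq_comm] at this
    have hzero (a : Option V) : φ (optionSingle K a) = 0 := by
      by_cases ha : (⟦a⟧ : Quotient s) = q₀
      · rw [hout, ha, ← hout none]
        simp [optionSingle]
      · exact (hout a).trans (congr_fun (LinearMap.mem_ker.1 hφ) ⟨_, ha⟩)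
    exact (Pi.basisFun K V).ext fun v => by simpa [optionSingle] using hzero (some v)
  have hdual := Subspace.finrank_add_finrank_dualAnnihilator_eq U
  have hle := LinearMap.finrank_le_finrank_of_injective hΦ
  rw [finrank_fintype_fun_eq_card] at hdual hle
  rw [Fintype.card_subtype_compl, Fintype.card_subtype_eq] at hle
  have : 0 < Fintype.card (Quotient s) := Fintype.card_pos_iff.2 ⟨q₀⟩
  rw [Nat.card_eq_fintype_card]
  omega

end GroundedSetoid

namespace LGraph

variable {V E L : Type} (G : LGraph V E L)

def groundedEnds : E ⊕ L → Option V × Option V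
  | .inl e => (some (G.ends e).1, some (G.ends e).2)
  | .inr l => (some (G.loopAt l), none)

noncomputable def groundedCount (T : Finset (Option V)) : ℕ :=
  Nat.card {r // (G.groundedEnds r).1 ∈ T ∧ (G.groundedEnds r).2 ∈ T}

open Classical in
theorem groundedCount_eq [Finite E] [Finite L] (T : Finset (Option V)) :
    G.groundedCount T =
      G.edgeCount (eraseNone T) + if none ∈ T then G.loopCount (eraseNone T) else 0 := by
  rw [groundedCount, Nat.card_congr Equiv.subtypeSum, Nat.card_sum]
  split_ifs with h <;> simp [edgeCount, loopCount, groundedEnds, h]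

theorem isGradedSparse202_iff_groundedCount [Finite E] [Finite L] :
    G.IsGradedSparse202 ↔
      ∀ T : Finset (Option V), T.Nonempty → G.groundedCount T + 2 ≤ 2 * #T := by
  constructor
  · rintro ⟨hedge, hloop⟩ T hT
    rw [groundedCount_eq]
    by_cases hnone : none ∈ T
    · have := hloop (eraseNone T)
      rw [if_pos hnone, card_eraseNone_of_mem hnone] at *
      have := hT.card_pos
      omega
    · have hS : (eraseNone T).Nonempty := by
        rwa [← card_pos, card_eraseNone_of_not_mem hnone, card_pos]
      have := hedge (eraseNone T)
      have := hS.card_pos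
      rw [if_neg hnone, ← card_eraseNone_of_not_mem hnone]
      omega
  · intro h
    refine ⟨fun S => ?_, fun S => ?_⟩
    · rcases S.eq_empty_or_nonempty with rfl | hS
      · simp [edgeCount]
      · have := h (S.map .some) hS.map
        rw [groundedCount_eq, eraseNone_map_some, if_neg (by simp), card_map] at this
        omega
    · have := h (insertNone S) insertNone_nonempty
      rw [groundedCount_eq, eraseNone_insertNone, if_pos none_mem_insertNone,
        card_insertNone] at this
      omega

variable [DecidableEq V]

def incVec (R : Type*) [Ring R] (r : E ⊕ L) : V → R :=
  optionSingle R (G.groundedEnds r).1 - optionSingle R (G.groundedEnds r).2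

theorem incVec_map {R S : Type*} [Ring R] [Ring S] (f : R →+* S) :
    (fun r v => f (G.incVec R r v)) = G.incVec S := by
  ext r v
  simp [incVec, optionSingle_map]

theorem card_le_two_mul_finrank_incVec [Fintype V] [Finite E] [Finite L] {K : Type*} [Field K]
    (hG : G.IsGradedSparse202) (Y : Finset (E ⊕ L)) :
    #Y ≤ 2 * (G.incVec K '' ↑Y).finrank K := by
  have hrank := card_add_one_le_finrank_add_card_quotient (span K (G.incVec K '' ↑Y))
  have hcount := card_add_two_mul_card_quotient_le (groundedSetoid (span K (G.incVec K '' ↑Y)))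
    G.groundedEnds Y (fun r hr => subset_span (Set.mem_image_of_mem _ hr))
    (G.isGradedSparse202_iff_groundedCount.1 hG)
  rw [Fintype.card_option] at hcount
  rw [Set.finrank]
  omega

theorem groundedCount_add_two_le_of_linearIndependent_row [Fintype V] [Fintype E] [Fintype L]
    {K : Type*} [Field K] {x y : E ⊕ L → K}
    (hind : LinearIndependent K (doubledMatrix (G.incVec K) x y).row) {T : Finset (Option V)}
    (hT : T.Nonempty) : G.groundedCount T + 2 ≤ 2 * #T := by
  classical
  obtain ⟨a₀, ha₀⟩ := hT
  set W := span K (((T.erase a₀).image fun a => optionSingle K a - optionSingle K a₀ :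
    Finset (V → K)) : Set (V → K))
  have hmem (a : Option V) (ha : a ∈ T) : optionSingle K a - optionSingle K a₀ ∈ W := by
    by_cases h : a = a₀
    · simp [h]
    · exact subset_span (mem_image_of_mem _ (mem_erase.2 ⟨h, ha⟩))
  have hW : finrank K W ≤ #T - 1 :=
    (finrank_span_finset_le_card _).trans (card_image_le.trans (card_erase_of_mem ha₀).le)
  have hrows := card_le_two_mul_finrank_of_linearIndependent_row_doubledMatrix hind
    {r | (G.groundedEnds r).1 ∈ T ∧ (G.groundedEnds r).2 ∈ T} W fun r hr => by
      rw [mem_filter] at hr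
      simpa [incVec] using sub_mem (hmem _ hr.2.1) (hmem _ hr.2.2)
  rw [groundedCount, Nat.card_eq_fintype_card, Fintype.card_subtype]
  have := card_pos.2 ⟨a₀, ha₀⟩
  omega

theorem isGradedSparse202_of_linearIndependent_row [Fintype V] [Fintype E] [Fintype L]
    {K : Type*} [Field K] {x y : E ⊕ L → K}
    (hind : LinearIndependent K (doubledMatrix (G.incVec K) x y).row) : G.IsGradedSparse202 :=
  G.isGradedSparse202_iff_groundedCount.2 fun _ hT =>
    G.groundedCount_add_two_le_of_linearIndependent_row hind hT

end LGraph

section M202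

variable {V E L : Type} [DecidableEq V]

theorem M202_eq_doubledMatrix (G : LGraph V E L) :
    M202 G = doubledMatrix (G.incVec (DSField E L)) (dsVar E L ∘ Sum.map .inl .inl)
      (dsVar E L ∘ Sum.map .inr .inr) := by
  have hne' : ∀ e, (G.ends e).2 ≠ (G.ends e).1 := fun e h => G.ne e h.symm
  ext (e | l) (v | v) <;>
    simp only [M202, doubledMatrix, LGraph.incVec, LGraph.groundedEnds, optionSingle,
      Matrix.of_apply, Sum.elim_inl, Sum.elim_inr, Pi.smul_apply, Pi.sub_apply, Pi.single_apply,
      Function.comp_apply, Sum.map_inl, Sum.map_inr, smul_eq_mul, Pi.zero_apply] <;>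
    split_ifs <;> simp_all

theorem M202_eq_map_doubledMatrix (G : LGraph V E L) :
    M202 G = (doubledMatrix (G.incVec _) (X ∘ Sum.map .inl .inl) (X ∘ Sum.map .inr .inr)).map
      (algebraMap (MvPolynomial ((E ⊕ E) ⊕ (L ⊕ L)) ℝ) (DSField E L)) := by
  rw [doubledMatrix_map, G.incVec_map, M202_eq_doubledMatrix]
  rfl

theorem linearIndependent_row_M202_of_isGradedSparse202 [Fintype V] [Fintype E] [Fintype L]
    {G : LGraph V E L} (hG : G.IsGradedSparse202) :
    LinearIndependent (DSField E L) (M202 G).row := by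
  classical
  obtain ⟨A, -, hA, hAc⟩ := exists_linearIndepOn_and_linearIndepOn_sdiff (K := ℝ) (G.incVec ℝ)
    (G.incVec ℝ) univ fun Y _ => by have := G.card_le_two_mul_finrank_incVec (K := ℝ) hG Y; omega
  let χ : E ⊕ L → ℝ := fun r => if r ∈ A then 1 else 0
  let ψ : E ⊕ L → ℝ := fun r => if r ∈ univ \ A then 1 else 0
  let pt : (E ⊕ E) ⊕ (L ⊕ L) → ℝ :=
    Sum.elim (Sum.elim (χ ∘ .inl) (ψ ∘ .inl)) (Sum.elim (χ ∘ .inr) (ψ ∘ .inr))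
  have hspec : (doubledMatrix (G.incVec _) (X ∘ Sum.map .inl .inl) (X ∘ Sum.map .inr .inr)).map
      (eval pt) = doubledMatrix (G.incVec ℝ) χ ψ := by
    rw [doubledMatrix_map, G.incVec_map]
    congr 1 <;> ext (r | r) <;> simp [pt]
  rw [M202_eq_map_doubledMatrix]
  refine Matrix.linearIndependent_row_map_of_linearIndependent_row_map
    (IsFractionRing.injective _ _) (eval pt) ?_
  rw [hspec]
  exact linearIndependent_row_doubledMatrix_ite (fun r => by by_cases r ∈ A <;> simp [*]) hA hAc

end M202

theorem M202_rank_iff_gradedSparse202_general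
    {V E L : Type} [Fintype V] [Fintype E] [Fintype L] [DecidableEq V]
    (G : LGraph V E L) :
    ((M202 G).rank = Fintype.card E + Fintype.card L ↔ G.IsGradedSparse202) ∧
    (Fintype.card E + Fintype.card L = 2 * Fintype.card V →
      ((M202 G).rank = 2 * Fintype.card V ↔ G.IsLooped22)) := by
  have hfull : (M202 G).rank = Fintype.card E + Fintype.card L ↔ G.IsGradedSparse202 := by
    rw [← Fintype.card_sum, Matrix.rank_eq_card_iff_linearIndependent_row]
    refine ⟨fun h => ?_, linearIndependent_row_M202_of_isGradedSparse202⟩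
    rw [M202_eq_doubledMatrix] at h
    exact G.isGradedSparse202_of_linearIndependent_row h
  refine ⟨hfull, fun hcard => ?_⟩
  rw [← hcard, hfull, LGraph.IsLooped22, and_iff_left hcard]

/-- **`M_{2,0,2}` represents the `(2,0,2)`-graded-sparsity matroid.** -/
theorem M202_rank_iff_gradedSparse202
    {V E L : Type} [Fintype V] [Fintype E] [Fintype L] [DecidableEq V]
    (G : LGraph V E L)
    (hmc : Fintype.card E + Fintype.card L ≤ 2 * Fintype.card V) :
    ((M202 G).rank = Fintype.card E + Fintype.card L ↔ G.IsGradedSparse202) ∧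
    (Fintype.card E + Fintype.card L = 2 * Fintype.card V →
      ((M202 G).rank = 2 * Fintype.card V ↔ G.IsLooped22)) :=
  M202_rank_iff_gradedSparse202_general G
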